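/- Let κ₁, κ₂ ∈ ℂ and let y, z : ℂ → ℂ be holomorphic. Define the 3×3 matrices B(λ,t) = [[−1, λ+y, 0],[0, −1/2, λ],[0, 0, −1]] (which is invertible, with determinant −1/2), C(λ,t) = [[z+2y²+t, −1−κ₁, 0],[−y, −z/2, −1−κ₂],[1, 0, 0]], and D(λ,t) = [[−λ, z/2, 1+κ₂],[−1, y, 0],[0, −1/2, −y]]. Set A(λ,t) := B(λ,t)⁻¹·C(λ,t). Then the zero-curvature equation ∂A/∂t − ∂D/∂λ + A·D − D·A = 0 holds for all (λ,t) ∈ ℂ² if and only if y′ = y² + z + t/2 and z′ = −2y·z − (κ₁ − κ₂) hold for all t ∈ ℂ. -/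

import Mathlib

/-!
Since `B` is upper triangular with constant diagonal, `A = B⁻¹C` is polynomial in `λ, t, y, z`,
and a direct computation expresses the zero-curvature matrix through the residuals
`p = y′ − (y² + z + t/2)` and `q = z′ + 2yz + κ₁ − κ₂` of the two equations. Its entries
`(1,0)` and `(1,1)` are `2p` and `q`, and every other entry is a multiple of `p` or `q`.
-/

open Matrix Complex

noncomputable section

/-- The left coefficient matrix `B(λ,t)` of the `JKT₂` pair. -/
def B₁₀ (y : ℂ → ℂ) (l t : ℂ) : Matrix (Fin 3) (Fin 3) ℂ :=
  !![-1, l + y t, 0; 0, -1/2, l; 0, 0, -1]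

/-- The right coefficient matrix `C(λ,t)` of the `JKT₂` pair. -/
def C₁₀ (κ₁ κ₂ : ℂ) (y z : ℂ → ℂ) (l t : ℂ) : Matrix (Fin 3) (Fin 3) ℂ :=
  !![z t + 2*(y t)^2 + t, -1-κ₁, 0; -y t, -(z t)/2, -1-κ₂; 1, 0, 0]

/-- The `t`-coefficient matrix `D(λ,t)` of the `JKT₂` pair. -/
def D₁₀ (κ₂ : ℂ) (y z : ℂ → ℂ) (l t : ℂ) : Matrix (Fin 3) (Fin 3) ℂ :=
  !![-l, (z t)/2, 1+κ₂; -1, y t, 0; 0, -1/2, -y t]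

theorem B₁₀_det (y : ℂ → ℂ) (l t : ℂ) : (B₁₀ y l t).det = -1 / 2 := by
  simp [B₁₀, Matrix.det_fin_three]

theorem isUnit_B₁₀ (y : ℂ → ℂ) (l t : ℂ) : IsUnit (B₁₀ y l t) :=
  (Matrix.isUnit_iff_isUnit_det _).2 (by rw [B₁₀_det]; norm_num)

theorem inv_B₁₀ (y : ℂ → ℂ) (l t : ℂ) :
    (B₁₀ y l t)⁻¹ = !![-1, -2 * (l + y t), -2 * (l + y t) * l; 0, -2, -2 * l; 0, 0, -1] := by
  refine Matrix.inv_eq_right_inv ?_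
  ext i j
  fin_cases i <;> fin_cases j <;> simp [B₁₀, Matrix.mul_apply, Fin.sum_univ_three] <;> ring

theorem inv_B₁₀_mul_C₁₀ (κ₁ κ₂ : ℂ) (y z : ℂ → ℂ) (l t : ℂ) :
    (B₁₀ y l t)⁻¹ * C₁₀ κ₁ κ₂ y z l t =
      !![-z t - t - 2 * l ^ 2, 1 + κ₁ + (l + y t) * z t, 2 * (1 + κ₂) * (l + y t);
         2 * y t - 2 * l, z t, 2 * (1 + κ₂);
         -1, 0, 0] := by
  ext i j
  fin_cases i <;> fin_cases j <;> simp [inv_B₁₀, C₁₀, Matrix.mul_apply, Fin.sum_univ_three] <;>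
    ring

theorem deriv_inv_B₁₀_mul_C₁₀ (κ₁ κ₂ : ℂ) {y z : ℂ → ℂ} (hy : Differentiable ℂ y)
    (hz : Differentiable ℂ z) (l t : ℂ) :
    Matrix.of (fun i j => deriv (fun s => ((B₁₀ y l s)⁻¹ * C₁₀ κ₁ κ₂ y z l s) i j) t) =
      !![-deriv z t - 1, (l + y t) * deriv z t + deriv y t * z t, 2 * (1 + κ₂) * deriv y t;
         2 * deriv y t, deriv z t, 0;
         0, 0, 0] := by
  simp only [inv_B₁₀_mul_C₁₀]
  ext i j
  fin_cases i <;> fin_cases j <;> simp (disch := fun_prop) <;> ring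

theorem deriv_D₁₀ (κ₂ : ℂ) (y z : ℂ → ℂ) (l t : ℂ) :
    Matrix.of (fun i j => deriv (fun w => D₁₀ κ₂ y z w t i j) l) =
      !![-1, 0, 0; 0, 0, 0; 0, 0, 0] := by
  ext i j
  fin_cases i <;> fin_cases j <;> simp [D₁₀]

def jktCurvature (κ₁ κ₂ : ℂ) (y z : ℂ → ℂ) (l t : ℂ) : Matrix (Fin 3) (Fin 3) ℂ :=
  (Matrix.of fun i j => deriv (fun s => ((B₁₀ y l s)⁻¹ * C₁₀ κ₁ κ₂ y z l s) i j) t)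
    - (Matrix.of fun i j => deriv (fun w => D₁₀ κ₂ y z w t i j) l)
    + ((B₁₀ y l t)⁻¹ * C₁₀ κ₁ κ₂ y z l t) * D₁₀ κ₂ y z l t
    - D₁₀ κ₂ y z l t * ((B₁₀ y l t)⁻¹ * C₁₀ κ₁ κ₂ y z l t)

def painleveResidualY (y z : ℂ → ℂ) (t : ℂ) : ℂ :=
  deriv y t - (y t ^ 2 + z t + t / 2)

def painleveResidualZ (κ₁ κ₂ : ℂ) (y z : ℂ → ℂ) (t : ℂ) : ℂ :=
  deriv z t - (-2 * y t * z t - (κ₁ - κ₂))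

theorem jktCurvature_eq (κ₁ κ₂ : ℂ) {y z : ℂ → ℂ} (hy : Differentiable ℂ y)
    (hz : Differentiable ℂ z) (l t : ℂ) :
    jktCurvature κ₁ κ₂ y z l t =
      !![-painleveResidualZ κ₁ κ₂ y z t,
           (l + y t) * painleveResidualZ κ₁ κ₂ y z t + z t * painleveResidualY y z t,
           2 * (1 + κ₂) * painleveResidualY y z t;
         2 * painleveResidualY y z t, painleveResidualZ κ₁ κ₂ y z t, 0;
         0, 0, 0] := by
  rw [jktCurvature, deriv_inv_B₁₀_mul_C₁₀ κ₁ κ₂ hy hz, deriv_D₁₀, inv_B₁₀_mul_C₁₀]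
  ext i j
  fin_cases i <;> fin_cases j <;> simp [D₁₀, painleveResidualY, painleveResidualZ] <;> ring

theorem jktCurvature_eq_zero_iff (κ₁ κ₂ : ℂ) {y z : ℂ → ℂ} (hy : Differentiable ℂ y)
    (hz : Differentiable ℂ z) (l t : ℂ) :
    jktCurvature κ₁ κ₂ y z l t = 0 ↔
      painleveResidualY y z t = 0 ∧ painleveResidualZ κ₁ κ₂ y z t = 0 := by
  rw [jktCurvature_eq κ₁ κ₂ hy hz]
  constructor
  · intro h
    exact ⟨by simpa using congr_fun₂ h 1 0, by simpa using congr_fun₂ h 1 1⟩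
  · rintro ⟨hY, hZ⟩
    ext i j
    fin_cases i <;> fin_cases j <;> simp [hY, hZ]

/-- `B(λ,t)` is invertible with determinant `−1/2`, and with `A := B⁻¹·C` the
zero-curvature equation `∂A/∂t − ∂D/∂λ + A·D − D·A = 0` holds identically iff
`y' = y² + z + t/2` and `z' = −2yz − (κ₁ − κ₂)`. -/
theorem stmt_10 (κ₁ κ₂ : ℂ) (y z : ℂ → ℂ)
    (hy : Differentiable ℂ y) (hz : Differentiable ℂ z) :
    (∀ l t : ℂ, (B₁₀ y l t).det = -1/2 ∧ IsUnit (B₁₀ y l t)) ∧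
    ((∀ l t : ℂ,
      (Matrix.of fun i j =>
          deriv (fun s => ((B₁₀ y l s)⁻¹ * C₁₀ κ₁ κ₂ y z l s) i j) t)
        - (Matrix.of fun i j => deriv (fun w => D₁₀ κ₂ y z w t i j) l)
        + ((B₁₀ y l t)⁻¹ * C₁₀ κ₁ κ₂ y z l t) * D₁₀ κ₂ y z l t
        - D₁₀ κ₂ y z l t * ((B₁₀ y l t)⁻¹ * C₁₀ κ₁ κ₂ y z l t) = 0)
    ↔ (∀ t : ℂ, deriv y t = (y t)^2 + z t + t/2 ∧
        deriv z t = -2*(y t)*(z t) - (κ₁ - κ₂))) := by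
  refine ⟨fun l t => ⟨B₁₀_det y l t, isUnit_B₁₀ y l t⟩, ?_⟩
  show (∀ l t, jktCurvature κ₁ κ₂ y z l t = 0) ↔ _
  simp only [jktCurvature_eq_zero_iff κ₁ κ₂ hy hz, painleveResidualY, painleveResidualZ,
    sub_eq_zero, forall_const]
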